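/- arXiv:1108.3588 — 3 statements merged into one kernel-verified Lean document; each statement's English description precedes it below -/
import Mathlib

section
/- Let (i_1,j_1), (i_2,j_2), …, (i_r,j_r) be prime pairs of D such that j_k ≤ i_{k+1} for all 1 ≤ k ≤ r−1 and B_{i_k,j_k} ≥ 1 for all k. Let B' be the matrix obtained from B by subtracting 1 from the entry in position (i_k,j_k) for each 1 ≤ k ≤ r, and let D' be the directed multigraph with adjacency matrix B'−I. If D' is bipartite (there is a function c from {1,…,n} to {0,1} with c_i ≠ c_j whenever i < j and B'_{i,j} ≥ 1), then B is signable. -/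
/-!
Let `c` be the bipartition of `D'` and `S` the diagonal matrix of the signs `±1` given by `c`.
Writing `B = 1 + N`, we get `S B S = 1 - P + F`, where `P ≥ 0` keeps the entries of `N` between
vertices of different colours and `F` those between vertices of the same colour. By the
bipartiteness of `D'`, `F` is the sum of the matrix units at those pairs `(i_k, j_k)` with
`B_{i_k j_k} = 1` whose ends have the same colour. Such a pair is not a unit pair, so `D` has a
path of length at least two from `i_k` to `j_k`; as the intervals `[i_k, j_k]` do not overlap,
that path avoids all other pairs and is a path in `P`.

It remains to see that `1 - P + F` has a nonnegative inverse, by induction on the total length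
of these paths. A path `a → c → ⋯ → b` is shortened by left multiplication with the
transvection `1 + E_{ac}`, which adds row `c` to row `a` of `1 - P + F` (see
`Matrix.shortcut`), and a path of length one is absorbed into `P`; when `F = 0`, the inverse of
`1 - P` is the finite geometric series in the nilpotent matrix `P`. Hence `S B⁻¹ S ≥ 0`.
-/

open Matrix

/-- A square integer matrix `M` is *signable* if there is a signing vector `s`
(valued in `{+1, -1}`) with `s i * M i j * s j = |M i j|` for all `i, j`. -/
def IsSignable {k : ℕ} (M : Matrix (Fin k) (Fin k) ℤ) : Prop :=
  ∃ s : Fin k → ℤ, (∀ i, s i = 1 ∨ s i = -1) ∧ ∀ i j, s i * M i j * s j = |M i j|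

/-- `{i, j}` is an edge of the maximal-path subgraph `Γ_D` of the digraph `D` with
adjacency matrix `B - 1`: there is an edge from `i` to `j` and no directed path
of length `≥ 2` from `i` to `j`. -/
def GammaEdge {k : ℕ} (B : Matrix (Fin k) (Fin k) ℤ) (i j : Fin k) : Prop :=
  i < j ∧ 1 ≤ B i j ∧ ∀ m : ℕ, 2 ≤ m → ((B - 1) ^ m) i j = 0

/-- The maximal-path subgraph `Γ_D` is bipartite. -/
def GammaBipartite {k : ℕ} (B : Matrix (Fin k) (Fin k) ℤ) : Prop :=
  ∃ c : Fin k → Bool, ∀ i j : Fin k, GammaEdge B i j → c i ≠ c j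

open Classical in
/-- The pairing `⟨i,j⟩`: it is `1` on the diagonal, `(-1)^ℓ(i,j)` where `ℓ(i,j)` is the
length of a longest directed path from `i` to `j` when such a path exists, and `0`
otherwise. -/
noncomputable def pairing {k : ℕ} (B : Matrix (Fin k) (Fin k) ℤ) (i j : Fin k) : ℤ :=
  if i = j then 1
  else if ∃ m : ℕ, 1 ≤ m ∧ ((B - 1) ^ m) i j ≠ 0 then
    (-1 : ℤ) ^ sSup {m : ℕ | 1 ≤ m ∧ ((B - 1) ^ m) i j ≠ 0}
  else 0

/-- `B⁽ᵛ⁾`: the matrix obtained from `B` by replacing every off-diagonal entry in row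
`v` and in column `v` by `0` (deleting the vertex `v` from the digraph). -/
def vertexDelete {k : ℕ} (B : Matrix (Fin k) (Fin k) ℤ) (v : Fin k) :
    Matrix (Fin k) (Fin k) ℤ :=
  Matrix.of fun i j => if i ≠ j ∧ (i = v ∨ j = v) then 0 else B i j

/-- `(i,j)` is a zero pair: no directed path from `i` to `j`. -/
def ZeroPair {k : ℕ} (B : Matrix (Fin k) (Fin k) ℤ) (i j : Fin k) : Prop :=
  ∀ m : ℕ, 1 ≤ m → ((B - 1) ^ m) i j = 0

/-- `(i,j)` is a unit pair: all directed paths from `i` to `j` have length one. -/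
def UnitPair {k : ℕ} (B : Matrix (Fin k) (Fin k) ℤ) (i j : Fin k) : Prop :=
  1 ≤ B i j ∧ ∀ m : ℕ, 2 ≤ m → ((B - 1) ^ m) i j = 0

/-- `(i,j)` is a composite pair: every directed path from `i` to `j` passes through
some fixed intermediate vertex `v`. -/
def CompositePair {k : ℕ} (B : Matrix (Fin k) (Fin k) ℤ) (i j : Fin k) : Prop :=
  ∃ v : Fin k, i < v ∧ v < j ∧ ∀ m : ℕ, 1 ≤ m → ((vertexDelete B v - 1) ^ m) i j = 0

/-- `(i,j)` is a prime pair: `i < j` and `(i,j)` is neither a zero pair, a unit pair,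
nor a composite pair. -/
def PrimePair {k : ℕ} (B : Matrix (Fin k) (Fin k) ℤ) (i j : Fin k) : Prop :=
  i < j ∧ ¬ZeroPair B i j ∧ ¬UnitPair B i j ∧ ¬CompositePair B i j

open Finset

/-- The closed intervals `[x.1, x.2]`, `x ∈ S`, pairwise meet at most in an endpoint. -/
def NonOverlapping {ι : Type*} [LE ι] (S : Set (ι × ι)) : Prop :=
  S.Pairwise fun x y => x.2 ≤ y.1 ∨ y.2 ≤ x.1

theorem NonOverlapping.eq_of_fst_mem_Ico {ι : Type*} [LinearOrder ι] {S : Set (ι × ι)}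
    (hS : NonOverlapping S) (hlt : ∀ y ∈ S, y.1 < y.2) {x y : ι × ι} (hx : x ∈ S)
    (hy : y ∈ S) (h₁ : x.1 ≤ y.1) (h₂ : y.1 < x.2) : y = x := by
  by_contra hne
  rcases hS hy hx hne with h | h
  · exact (h.trans h₁).not_gt (hlt y hy)
  · exact h.not_gt h₂

namespace Matrix

section StrictUpperTriangular

variable {ι R : Type*}

def IsStrictUpperTriangular [Zero R] [LE ι] (P : Matrix ι ι R) : Prop :=
  ∀ ⦃i j⦄, j ≤ i → P i j = 0

theorem mul_apply_pos_iff [Fintype ι] [Semiring R] [LinearOrder R] [IsStrictOrderedRing R]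
    {M N : Matrix ι ι R} (hM : ∀ i j, 0 ≤ M i j) (hN : ∀ i j, 0 ≤ N i j) {i j : ι} :
    0 < (M * N) i j ↔ ∃ k, 0 < M i k ∧ 0 < N k j := by
  rw [mul_apply, sum_pos_iff_of_nonneg fun k _ => mul_nonneg (hM i k) (hN k j)]
  simp only [mem_univ, true_and]
  refine exists_congr fun k => ⟨fun h => ?_, fun h => mul_pos h.1 h.2⟩
  exact ⟨(hM i k).lt_of_ne fun h0 => by simp [← h0] at h,
    (hN k j).lt_of_ne fun h0 => by simp [← h0] at h⟩

namespace IsStrictUpperTriangular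

variable [LinearOrder ι] [Semiring R] {P Q : Matrix ι ι R}

theorem isUpperTriangular (hP : P.IsStrictUpperTriangular) : P.IsUpperTriangular :=
  fun _ _ h => hP h.le

theorem lt_of_apply_ne_zero (hP : P.IsStrictUpperTriangular) {i j : ι} (h : P i j ≠ 0) :
    i < j :=
  lt_of_not_ge fun hji => h (hP hji)

variable [Fintype ι] [DecidableEq ι]

theorem pow_succ_apply_eq_zero (hP : P.IsStrictUpperTriangular) (m : ℕ) {i j : ι}
    (hji : j ≤ i) : (P ^ (m + 1)) i j = 0 := by
  rw [pow_succ, mul_apply]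
  refine sum_eq_zero fun k _ => ?_
  rcases lt_or_ge k i with hki | hik
  · rw [hP.isUpperTriangular.pow m hki, zero_mul]
  · rw [hP (hji.trans hik), mul_zero]

theorem lt_of_pow_succ_apply_ne_zero (hP : P.IsStrictUpperTriangular) {m : ℕ} {i j : ι}
    (h : (P ^ (m + 1)) i j ≠ 0) : i < j :=
  lt_of_not_ge fun hji => h (hP.pow_succ_apply_eq_zero m hji)

theorem pow_card_eq_zero (hP : P.IsStrictUpperTriangular) : P ^ Fintype.card ι = 0 := by
  have key : ∀ m i j, (P ^ m) i j ≠ 0 → m ≤ #{k | i < k} := by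
    intro m
    induction m with
    | zero => simp
    | succ m ih =>
      intro i j h
      rw [pow_succ', mul_apply] at h
      obtain ⟨k, -, hk⟩ := exists_ne_zero_of_sum_ne_zero h
      have hik : i < k := hP.lt_of_apply_ne_zero (left_ne_zero_of_mul hk)
      have hcard : #{l | k < l} < #{l | i < l} := by
        have hsub : ({l | k < l} : Finset ι) ⊆ ({l | i < l} : Finset ι) := fun l hl => by
          simp only [mem_filter, mem_univ, true_and] at hl ⊢
          exact hik.trans hl
        exact card_lt_card ((ssubset_iff_of_subset hsub).2 ⟨k, by simp [hik], by simp⟩)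
      exact (ih k j (right_ne_zero_of_mul hk)).trans_lt hcard
  ext i j
  by_contra h
  exact (key _ i j h).not_gt (card_lt_univ_of_notMem (x := i) (by simp))

theorem pow_apply_eq_of_rows_eq (hP : P.IsStrictUpperTriangular)
    (hQ : Q.IsStrictUpperTriangular) {a b : ι} (h : ∀ i, a ≤ i → i < b → P i = Q i)
    (m : ℕ) : (P ^ m) a b = (Q ^ m) a b := by
  induction m generalizing a with
  | zero => rfl
  | succ m ih =>
    rcases le_or_gt b a with hba | hab
    · rw [hP.pow_succ_apply_eq_zero m hba, hQ.pow_succ_apply_eq_zero m hba]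
    rw [pow_succ', pow_succ', mul_apply, mul_apply]
    refine sum_congr rfl fun c _ => ?_
    rcases le_or_gt c a with hca | hac
    · rw [hP hca, hQ hca, zero_mul, zero_mul]
    · rw [h a le_rfl hab, ih fun i hci hib => h i (hac.le.trans hci) hib]

end IsStrictUpperTriangular

/-- A path of length at least two from `a` to `b` only uses entries in rows `[a, b)`, and never
the entry `(a, b)` itself. -/
theorem pow_add_two_apply_pos_of_eq [Fintype ι] [DecidableEq ι] [LinearOrder ι] [Semiring R]
    [LinearOrder R] [IsStrictOrderedRing R] {P N : Matrix ι ι R}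
    (hP : P.IsStrictUpperTriangular) (hN : N.IsStrictUpperTriangular)
    (hP0 : ∀ i j, 0 ≤ P i j) (hN0 : ∀ i j, 0 ≤ N i j) {a b : ι}
    (h : ∀ i j, a ≤ i → i < b → (i, j) ≠ (a, b) → P i j = N i j) {m : ℕ}
    (hab : 0 < (N ^ (m + 2)) a b) : 0 < (P ^ (m + 2)) a b := by
  rw [pow_succ', mul_apply_pos_iff hN0 (pow_apply_nonneg hN0 _)] at hab
  obtain ⟨c, hac, hcb⟩ := hab
  have hac' : a < c := hN.lt_of_apply_ne_zero hac.ne'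
  have hcb' : c < b := hN.lt_of_pow_succ_apply_ne_zero hcb.ne'
  rw [pow_succ', mul_apply_pos_iff hP0 (pow_apply_nonneg hP0 _)]
  refine ⟨c, ?_, ?_⟩
  · rwa [h a c le_rfl (hac'.trans hcb') fun h' => hcb'.ne (Prod.ext_iff.1 h').2]
  · rwa [hP.pow_apply_eq_of_rows_eq hN fun i hci hib => funext fun j =>
      h i j (hac'.le.trans hci) hib fun h' => (hac'.trans_le hci).ne' (Prod.ext_iff.1 h').1]

end StrictUpperTriangular

variable {ι : Type*}

theorem sum_single_one_apply [DecidableEq ι] (T : Finset (ι × ι)) (i j : ι) :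
    (∑ y ∈ T, single y.1 y.2 (1 : ℤ)) i j = if (i, j) ∈ T then 1 else 0 := by
  rw [sum_apply, ← sum_ite_eq' T (i, j) fun _ => (1 : ℤ)]
  refine sum_congr rfl fun y _ => ?_
  simp [single_apply, Prod.ext_iff]

section colouring

variable {κ : Type*} [DecidableEq κ] (c : ι → κ)

def monochromaticPart (N : Matrix ι ι ℤ) : Matrix ι ι ℤ :=
  of fun i j => if c i = c j then N i j else 0

def bichromaticPart (N : Matrix ι ι ℤ) : Matrix ι ι ℤ :=
  of fun i j => if c i = c j then 0 else N i j

variable {c} {N : Matrix ι ι ℤ}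

theorem bichromaticPart_add_monochromaticPart :
    bichromaticPart c N + monochromaticPart c N = N := by
  ext i j
  by_cases h : c i = c j <;> simp [bichromaticPart, monochromaticPart, h]

theorem bichromaticPart_nonneg (hN0 : ∀ i j, 0 ≤ N i j) (i j : ι) :
    0 ≤ bichromaticPart c N i j := by
  by_cases h : c i = c j <;> simp [bichromaticPart, h, hN0 i j]

theorem IsStrictUpperTriangular.bichromaticPart [LE ι] (hN : N.IsStrictUpperTriangular) :
    (bichromaticPart c N).IsStrictUpperTriangular := fun i j hji => by
  simp [Matrix.bichromaticPart, hN hji]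

end colouring

variable [Fintype ι] [DecidableEq ι]

def HasNonnegInverse (M : Matrix ι ι ℤ) : Prop :=
  ∃ C : Matrix ι ι ℤ, M * C = 1 ∧ ∀ i j, 0 ≤ C i j

theorem hasNonnegInverse_one_sub [LinearOrder ι] {P : Matrix ι ι ℤ}
    (hP : P.IsStrictUpperTriangular) (hP0 : ∀ i j, 0 ≤ P i j) : HasNonnegInverse (1 - P) :=
  ⟨∑ m ∈ range (Fintype.card ι), P ^ m,
    by rw [mul_neg_geom_sum, hP.pow_card_eq_zero, sub_zero],
    fun i j => by rw [sum_apply]; exact sum_nonneg fun m _ => pow_apply_nonneg hP0 m i j⟩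

theorem HasNonnegInverse.one_sub_mul {N X : Matrix ι ι ℤ} (hN : HasNonnegInverse N)
    (hX0 : ∀ i j, 0 ≤ X i j) (hXX : X * X = 0) : HasNonnegInverse ((1 - X) * N) := by
  obtain ⟨C, hC, hC0⟩ := hN
  refine ⟨C * (1 + X), ?_, fun i j => ?_⟩
  · calc (1 - X) * N * (C * (1 + X)) = (1 - X) * (N * C) * (1 + X) := by simp only [mul_assoc]
      _ = 1 - X * X := by rw [hC]; noncomm_ring
      _ = 1 := by rw [hXX, sub_zero]
  · rw [mul_apply]
    refine sum_nonneg fun k _ => mul_nonneg (hC0 i k) ?_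
    rw [add_apply, one_apply]
    exact add_nonneg (by split_ifs <;> norm_num) (hX0 k j)

/-- Adding row `c` to row `a` of `1 - P` and deleting one edge `a → c`: a path
`a → c → d → ⋯` of `P` becomes the shorter path `a → d → ⋯`. -/
def shortcut (P : Matrix ι ι ℤ) (a c : ι) : Matrix ι ι ℤ :=
  P + single a c 1 * P - single a c 1

section shortcut

variable {P : Matrix ι ι ℤ} {a c : ι}

theorem shortcut_apply_of_ne {i : ι} (hi : i ≠ a) (j : ι) : shortcut P a c i j = P i j := by
  simp [shortcut, hi, single_apply_of_row_ne hi.symm]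

theorem shortcut_apply_self (j : ι) :
    shortcut P a c a j = P a j + P c j - if j = c then 1 else 0 := by
  by_cases hj : j = c
  · subst hj; simp [shortcut]
  · simp [shortcut, hj, single_apply_of_col_ne _ _ (Ne.symm hj)]

theorem shortcut_nonneg (hP0 : ∀ i j, 0 ≤ P i j) (hac : 0 < P a c) (i j : ι) :
    0 ≤ shortcut P a c i j := by
  by_cases hi : i = a
  · subst hi
    rw [shortcut_apply_self]
    have := hP0 c j
    split_ifs with hj
    · subst hj; omega
    · have := hP0 i j; omega
  · rw [shortcut_apply_of_ne hi]; exact hP0 i j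

theorem one_sub_shortcut_add {F : Matrix ι ι ℤ} (hac : a ≠ c) (hF : F c = 0) :
    (1 - single a c 1) * (1 - shortcut P a c + F) = 1 - P + F := by
  have hXX : single a c (1 : ℤ) * single a c 1 = 0 := single_mul_single_of_ne 1 a c a hac.symm 1
  have hXF : single a c (1 : ℤ) * F = 0 := by
    ext i j
    by_cases hi : i = a
    · subst hi; simp [hF]
    · simp [hi]
  calc (1 - single a c 1) * (1 - shortcut P a c + F)
      = 1 - P + F + single a c 1 * single a c 1 * P - single a c 1 * single a c 1
        - single a c 1 * F := by unfold shortcut; noncomm_ring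
    _ = 1 - P + F := by rw [hXX, hXF]; simp

variable [LinearOrder ι]

theorem IsStrictUpperTriangular.shortcut (hP : P.IsStrictUpperTriangular) (hac : a < c) :
    (shortcut P a c).IsStrictUpperTriangular := by
  intro i j hji
  by_cases hi : i = a
  · subst hi
    rw [shortcut_apply_self, hP hji, hP (hji.trans hac.le), if_neg (hji.trans_lt hac).ne]
    simp
  · rw [shortcut_apply_of_ne hi, hP hji]

theorem pow_shortcut_apply_pos (hP : P.IsStrictUpperTriangular) (hP0 : ∀ i j, 0 ≤ P i j)
    (hac : 0 < P a c) {m : ℕ} {b : ι} (hcb : 0 < (P ^ (m + 1)) c b) :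
    0 < (shortcut P a c ^ (m + 1)) a b := by
  have hac' : a < c := hP.lt_of_apply_ne_zero hac.ne'
  rw [pow_succ', mul_apply_pos_iff hP0 (pow_apply_nonneg hP0 m)] at hcb
  obtain ⟨d, hcd, hdb⟩ := hcb
  have hcd' : c < d := hP.lt_of_apply_ne_zero hcd.ne'
  rw [pow_succ', mul_apply_pos_iff (shortcut_nonneg hP0 hac)
    (pow_apply_nonneg (shortcut_nonneg hP0 hac) m)]
  refine ⟨d, ?_, ?_⟩
  · rw [shortcut_apply_self, if_neg hcd'.ne']
    linarith [hP0 a d]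
  · rwa [(hP.shortcut hac').pow_apply_eq_of_rows_eq hP fun i hdi _ =>
      funext <| shortcut_apply_of_ne (hac'.trans (hcd'.trans_le hdi)).ne']

end shortcut

section LinearOrder

variable [LinearOrder ι]

theorem hasNonnegInverse_one_sub_add_single_add {P₀ F : Matrix ι ι ℤ} {a b : ι}
    (hF : ∀ Q : Matrix ι ι ℤ, Q.IsStrictUpperTriangular → (∀ i j, 0 ≤ Q i j) →
      (∀ i, i ≠ a → Q i = P₀ i) → HasNonnegInverse (1 - Q + F))
    (hFrow : ∀ c, a < c → c < b → F c = 0) (m : ℕ) {P : Matrix ι ι ℤ}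
    (hP : P.IsStrictUpperTriangular) (hP0 : ∀ i j, 0 ≤ P i j)
    (hPP₀ : ∀ i, i ≠ a → P i = P₀ i)
    (hab : 0 < (P ^ (m + 1)) a b) :
    HasNonnegInverse (1 - P + (single a b 1 + F)) := by
  induction m generalizing P with
  | zero =>
    rw [pow_one] at hab
    have hab' : a < b := hP.lt_of_apply_ne_zero hab.ne'
    rw [show 1 - P + (single a b 1 + F) = 1 - (P - single a b 1) + F by abel]
    refine hF _ (fun i j hji => ?_) (fun i j => ?_) (fun i hi => ?_)
    · rw [sub_apply, hP hji, single_apply_of_ne _ _ _ _ _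
        (by rintro ⟨rfl, rfl⟩; exact hji.not_gt hab'), sub_zero]
    · by_cases h : a = i ∧ b = j
      · obtain ⟨rfl, rfl⟩ := h
        simp only [sub_apply, single_apply_same]
        omega
      · simpa [single_apply_of_ne _ _ _ _ _ h] using hP0 i j
    · ext j
      simp [single_apply_of_row_ne (Ne.symm hi), hPP₀ i hi]
  | succ m ih =>
    rw [pow_succ', mul_apply_pos_iff hP0 (pow_apply_nonneg hP0 _)] at hab
    obtain ⟨c, hac, hcb⟩ := hab
    have hac' : a < c := hP.lt_of_apply_ne_zero hac.ne'
    have hcb' : c < b := hP.lt_of_pow_succ_apply_ne_zero hcb.ne'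
    have hrow : (single a b (1 : ℤ) + F) c = 0 := by
      ext j
      simp [single_apply_of_row_ne hac'.ne, hFrow c hac' hcb']
    rw [← one_sub_shortcut_add hac'.ne hrow]
    refine HasNonnegInverse.one_sub_mul ?_ (fun i j => ?_)
      (single_mul_single_of_ne 1 a c a hac'.ne' 1)
    · refine ih (hP.shortcut hac') (shortcut_nonneg hP0 hac) (fun i hi => ?_)
        (pow_shortcut_apply_pos hP hP0 hac hcb)
      rw [← hPP₀ i hi]
      exact funext (shortcut_apply_of_ne hi)
    · rw [single_apply]
      split_ifs <;> norm_num

theorem hasNonnegInverse_one_sub_add_sum_single {S : Finset (ι × ι)}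
    (hS : NonOverlapping (S : Set (ι × ι))) {P : Matrix ι ι ℤ}
    (hP : P.IsStrictUpperTriangular) (hP0 : ∀ i j, 0 ≤ P i j)
    (hpath : ∀ x ∈ S, ∃ m, 0 < (P ^ (m + 1)) x.1 x.2) :
    HasNonnegInverse (1 - P + ∑ x ∈ S, single x.1 x.2 1) := by
  induction S using Finset.induction_on generalizing P with
  | empty => simpa using hasNonnegInverse_one_sub hP hP0
  | insert x S hxS ih =>
    have hlt : ∀ y ∈ insert x S, y.1 < y.2 := fun y hy => by
      obtain ⟨m, hm⟩ := hpath y hy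
      exact hP.lt_of_pow_succ_apply_ne_zero hm.ne'
    have hx : x ∈ insert x S := mem_insert_self x S
    have hyS : ∀ y ∈ S, y ∈ insert x S := fun y => mem_insert_of_mem
    have hF : ∀ Q : Matrix ι ι ℤ, Q.IsStrictUpperTriangular → (∀ i j, 0 ≤ Q i j) →
        (∀ i, i ≠ x.1 → Q i = P i) →
          HasNonnegInverse (1 - Q + ∑ y ∈ S, single y.1 y.2 1) := by
      refine fun Q hQ hQ0 hQP => ih (hS.mono (by simp)) hQ hQ0 fun y hy => ?_
      obtain ⟨m, hm⟩ := hpath y (hyS y hy)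
      refine ⟨m, ?_⟩
      rwa [hQ.pow_apply_eq_of_rows_eq hP fun i h₁ h₂ => hQP i ?_]
      rintro rfl
      exact hxS (hS.eq_of_fst_mem_Ico hlt (hyS y hy) hx h₁ h₂ ▸ hy)
    have hFrow : ∀ c, x.1 < c → c < x.2 → (∑ y ∈ S, single y.1 y.2 (1 : ℤ)) c = 0 := by
      intro c h₁ h₂
      ext j
      rw [sum_apply]
      refine sum_eq_zero fun y hy => single_apply_of_row_ne (fun hyc => ?_) _ _ _
      have := hS.eq_of_fst_mem_Ico hlt hx (hyS y hy) (hyc ▸ h₁.le) (hyc ▸ h₂)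
      exact hxS (this ▸ hy)
    obtain ⟨m, hm⟩ := hpath x hx
    rw [sum_insert hxS]
    exact hasNonnegInverse_one_sub_add_single_add hF hFrow m hP hP0 (fun _ _ => rfl) hm

end LinearOrder

theorem pow_add_two_bichromaticPart_apply_pos [LinearOrder ι] {κ : Type*} [DecidableEq κ]
    {c : ι → κ} {N : Matrix ι ι ℤ} (hN : N.IsStrictUpperTriangular)
    (hN0 : ∀ i j, 0 ≤ N i j)
    {J : Finset (ι × ι)} (hJ : NonOverlapping (J : Set (ι × ι)))
    (hJlt : ∀ y ∈ J, y.1 < y.2) (hmono : monochromaticPart c N = ∑ y ∈ J, single y.1 y.2 1)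
    {y : ι × ι} (hy : y ∈ J) {m : ℕ} (hm : 0 < (N ^ (m + 2)) y.1 y.2) :
    0 < (bichromaticPart c N ^ (m + 2)) y.1 y.2 := by
  refine pow_add_two_apply_pos_of_eq hN.bichromaticPart hN (bichromaticPart_nonneg hN0) hN0
    (fun i j h₁ h₂ hne => ?_) hm
  have hsplit := congrFun (congrFun (bichromaticPart_add_monochromaticPart (c := c) (N := N)) i) j
  have hij : (i, j) ∉ J := fun hij => hne (hJ.eq_of_fst_mem_Ico hJlt hy hij h₁ h₂)
  rwa [add_apply, hmono, sum_single_one_apply, if_neg hij, add_zero] at hsplit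

end Matrix

def boolSign (b : Bool) : ℤ := if b then 1 else -1

theorem boolSign_mul_self (b : Bool) : boolSign b * boolSign b = 1 := by
  cases b <;> simp [boolSign]

theorem Matrix.diagonal_mul_one_add_mul_diagonal {ι : Type*} [Fintype ι] [DecidableEq ι]
    (c : ι → Bool) (N : Matrix ι ι ℤ) :
    diagonal (boolSign ∘ c) * (1 + N) * diagonal (boolSign ∘ c)
      = 1 - bichromaticPart c N + monochromaticPart c N := by
  ext i j
  simp only [mul_diagonal, diagonal_mul, add_apply, sub_apply, one_apply, bichromaticPart,
    monochromaticPart, of_apply, Function.comp, boolSign]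
  by_cases hij : i = j
  · subst hij; cases c i <;> simp
  · cases hi : c i <;> cases hj : c j <;> simp [hij]

theorem isSignable_inv_of_hasNonnegInverse {k : ℕ} {B : Matrix (Fin k) (Fin k) ℤ}
    (c : Fin k → Bool)
    (h : HasNonnegInverse (diagonal (boolSign ∘ c) * B * diagonal (boolSign ∘ c))) :
    IsSignable B⁻¹ := by
  obtain ⟨C, hC, hC0⟩ := h
  set D := diagonal (boolSign ∘ c)
  have hDD : D * D = 1 := by
    rw [diagonal_mul_diagonal, ← diagonal_one]
    exact congrArg diagonal (funext fun i => boolSign_mul_self (c i))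
  have hinv : B⁻¹ = D * C * D := by
    refine inv_eq_right_inv ?_
    calc B * (D * C * D) = D * (D * B * D * C) * D := by simp only [← mul_assoc, hDD, one_mul]
      _ = 1 := by rw [hC, mul_one, hDD]
  refine ⟨boolSign ∘ c, fun i => by cases c i <;> simp [boolSign], fun i j => ?_⟩
  rw [hinv, mul_diagonal, diagonal_mul]
  cases hi : c i <;> cases hj : c j <;> simp [boolSign, hi, hj, abs_of_nonneg (hC0 i j)]

section unitriangular

variable {ι : Type*} [DecidableEq ι] [LinearOrder ι] {B : Matrix ι ι ℤ}

theorem isStrictUpperTriangular_sub_one (h1 : ∀ i, B i i = 1)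
    (h2 : ∀ i j : ι, j < i → B i j = 0) :
    (B - 1).IsStrictUpperTriangular := by
  intro i j hji
  rcases hji.lt_or_eq with hji | rfl
  · rw [Matrix.sub_apply, h2 i j hji, one_apply_ne hji.ne', sub_zero]
  · rw [Matrix.sub_apply, h1, one_apply_eq, sub_self]

theorem sub_one_nonneg (hB : (B - 1).IsStrictUpperTriangular)
    (h3 : ∀ i j : ι, i < j → 0 ≤ B i j) (i j : ι) : 0 ≤ (B - 1) i j := by
  rcases lt_or_ge i j with hij | hji
  · rw [Matrix.sub_apply, one_apply_ne hij.ne, sub_zero]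
    exact h3 i j hij
  · rw [hB hji]

end unitriangular

theorem exists_pow_add_two_apply_pos_of_not_unitPair {k : ℕ} {B : Matrix (Fin k) (Fin k) ℤ}
    (hN0 : ∀ i j, 0 ≤ (B - 1) i j) {a b : Fin k} (hu : ¬UnitPair B a b) (hab : 1 ≤ B a b) :
    ∃ m : ℕ, 0 < ((B - 1) ^ (m + 2)) a b := by
  simp only [UnitPair, not_and, not_forall] at hu
  obtain ⟨m, hm, hne⟩ := hu hab
  obtain ⟨m, rfl⟩ := Nat.exists_eq_add_of_le' hm
  exact ⟨m, (pow_apply_nonneg hN0 _ a b).lt_of_ne' hne⟩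

section intervals

variable {ι : Type*} [LinearOrder ι] {r : ℕ} {p : Fin r → ι × ι}

theorem snd_le_fst_of_lt (hp : ∀ k, (p k).1 ≤ (p k).2)
    (hchain : ∀ k : ℕ, (h : k + 1 < r) →
      (p ⟨k, Nat.lt_of_succ_lt h⟩).2 ≤ (p ⟨k + 1, h⟩).1)
    {k l : Fin r} (hkl : k < l) : (p k).2 ≤ (p l).1 := by
  obtain ⟨l, hl⟩ := l
  induction l with
  | zero => exact absurd (Fin.lt_def.1 hkl) k.val.not_lt_zero
  | succ l ih =>
    rcases (Nat.lt_succ_iff_lt_or_eq.1 (Fin.lt_def.1 hkl)) with h | h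
    · exact (ih (by omega) (Fin.lt_def.2 h)).trans ((hp _).trans (hchain l hl))
    · rw [show k = ⟨l, by omega⟩ from Fin.ext h]
      exact hchain l hl

theorem injective_of_snd_le_fst (hp : ∀ k, (p k).1 < (p k).2)
    (hsep : ∀ {k l}, k < l → (p k).2 ≤ (p l).1) : Function.Injective p := by
  intro k l hkl
  by_contra hne
  rcases lt_or_gt_of_ne hne with h | h
  · exact (hsep h).not_gt (hkl ▸ hp l)
  · exact (hsep h).not_gt (hkl ▸ hp k)

theorem nonOverlapping_range_of_snd_le_fst (hsep : ∀ {k l}, k < l → (p k).2 ≤ (p l).1) :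
    NonOverlapping (Set.range p) := by
  rintro _ ⟨k, rfl⟩ _ ⟨l, rfl⟩ hne
  rcases lt_trichotomy k l with h | rfl | h
  · exact .inl (hsep h)
  · exact absurd rfl hne
  · exact .inr (hsep h)

end intervals

theorem monochromaticPart_sub_one_eq_sum_single {ι κ : Type*} [Fintype ι] [DecidableEq ι]
    [LinearOrder ι] [DecidableEq κ] {r : ℕ} {B : Matrix ι ι ℤ} {p : Fin r → ι × ι}
    {c : ι → κ}
    (hp : Function.Injective p) (hN : (B - 1).IsStrictUpperTriangular)
    (h3 : ∀ i j : ι, i < j → 0 ≤ B i j) (hlt : ∀ l, (p l).1 < (p l).2)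
    (hedge : ∀ l, 1 ≤ B (p l).1 (p l).2)
    (hc : ∀ i j : ι, i < j →
      1 ≤ (B - ∑ l, single (p l).1 (p l).2 1 : Matrix ι ι ℤ) i j → c i ≠ c j) :
    monochromaticPart c (B - 1)
      = ∑ y ∈ (univ.image p).filter (fun y => c y.1 = c y.2), single y.1 y.2 1 := by
  rw [← sum_image (f := fun y : ι × ι => single y.1 y.2 (1 : ℤ))
    fun _ _ _ _ h => hp h] at hc
  ext i j
  rw [sum_single_one_apply]
  by_cases hcij : c i = c j
  swap
  · simp [monochromaticPart, hcij]
  simp only [monochromaticPart, of_apply, mem_filter, hcij, if_true, and_true]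
  rcases lt_or_ge i j with hij | hji
  swap
  · rw [hN hji, if_neg]
    intro hmem
    obtain ⟨l, -, hl⟩ := mem_image.1 hmem
    have := hlt l
    simp only [hl] at this
    exact hji.not_gt this
  have hB' : (B - ∑ y ∈ univ.image p, single y.1 y.2 1 : Matrix ι ι ℤ) i j ≤ 0 := by
    by_contra! h
    exact hc i j hij h hcij
  rw [Matrix.sub_apply, sum_single_one_apply] at hB'
  rw [Matrix.sub_apply, one_apply_ne hij.ne, sub_zero]
  split_ifs at hB' ⊢ with hmem
  · obtain ⟨l, -, hl⟩ := mem_image.1 hmem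
    have := hedge l
    simp only [hl] at this
    omega
  · have := h3 i j hij
    omega

theorem stmt15_general {n : ℕ} (B : Matrix (Fin n) (Fin n) ℤ)
    (h1 : ∀ i, B i i = 1) (h2 : ∀ i j : Fin n, j < i → B i j = 0)
    (h3 : ∀ i j : Fin n, i < j → 0 ≤ B i j)
    (r : ℕ) (p : Fin r → Fin n × Fin n)
    (hprime : ∀ k : Fin r, PrimePair B (p k).1 (p k).2)
    (hchain : ∀ k : ℕ, (h : k + 1 < r) →
      (p ⟨k, Nat.lt_of_succ_lt h⟩).2 ≤ (p ⟨k + 1, h⟩).1)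
    (hedge : ∀ k : Fin r, 1 ≤ B (p k).1 (p k).2)
    (B' : Matrix (Fin n) (Fin n) ℤ)
    (hB' : B' = B - ∑ k : Fin r, Matrix.single (p k).1 (p k).2 1)
    (hbip : ∃ c : Fin n → Bool, ∀ i j : Fin n, i < j → 1 ≤ B' i j → c i ≠ c j) :
    IsSignable B⁻¹ := by
  obtain ⟨c, hc⟩ := hbip
  subst hB'
  have hN := isStrictUpperTriangular_sub_one h1 h2
  have hN0 := sub_one_nonneg hN h3
  have hlt : ∀ k, (p k).1 < (p k).2 := fun k => (hprime k).1
  have hsep : ∀ {k l : Fin r}, k < l → (p k).2 ≤ (p l).1 :=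
    snd_le_fst_of_lt (fun k => (hlt k).le) hchain
  set J := (univ.image p).filter fun y => c y.1 = c y.2
  have hJp : ∀ y ∈ J, ∃ k, p k = y := fun y hy => by
    obtain ⟨k, -, hk⟩ := mem_image.1 (mem_filter.1 hy).1
    exact ⟨k, hk⟩
  have hJ : NonOverlapping (J : Set (Fin n × Fin n)) :=
    (nonOverlapping_range_of_snd_le_fst hsep).mono fun y hy => hJp y hy
  have hJlt : ∀ y ∈ J, y.1 < y.2 := fun y hy => by
    obtain ⟨k, rfl⟩ := hJp y hy
    exact hlt k
  have hmono := monochromaticPart_sub_one_eq_sum_single (injective_of_snd_le_fst hlt hsep)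
    hN h3 hlt hedge hc
  refine isSignable_inv_of_hasNonnegInverse c ?_
  rw [← add_sub_cancel (1 : Matrix (Fin n) (Fin n) ℤ) B, diagonal_mul_one_add_mul_diagonal,
    hmono]
  refine hasNonnegInverse_one_sub_add_sum_single hJ hN.bichromaticPart
    (bichromaticPart_nonneg hN0) fun y hy => ?_
  obtain ⟨k, rfl⟩ := hJp y hy
  obtain ⟨m, hm⟩ := exists_pow_add_two_apply_pos_of_not_unitPair hN0 (hprime k).2.2.1 (hedge k)
  exact ⟨m + 1, pow_add_two_bichromaticPart_apply_pos hN hN0 hJ hJlt hmono hy hm⟩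

/-- Let `(i₁,j₁), …, (i_r,j_r)` be prime pairs of `D` with
`j_k ≤ i_(k+1)` for all `k` and an edge from `i_k` to `j_k` in `D` for each `k`.
Let `B'` be obtained from `B` by subtracting `1` from the entry in position
`(i_k, j_k)` for each `k`.  If the digraph `D'` with adjacency matrix `B' - I` is
bipartite, then `B` is signable. -/
theorem stmt15 {n : ℕ} (hn : 1 ≤ n) (B : Matrix (Fin n) (Fin n) ℤ)
    (h1 : ∀ i, B i i = 1) (h2 : ∀ i j : Fin n, j < i → B i j = 0)
    (h3 : ∀ i j : Fin n, i < j → 0 ≤ B i j)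
    (r : ℕ) (p : Fin r → Fin n × Fin n)
    (hprime : ∀ k : Fin r, PrimePair B (p k).1 (p k).2)
    (hchain : ∀ k : ℕ, (h : k + 1 < r) →
      (p ⟨k, Nat.lt_of_succ_lt h⟩).2 ≤ (p ⟨k + 1, h⟩).1)
    (hedge : ∀ k : Fin r, 1 ≤ B (p k).1 (p k).2)
    (B' : Matrix (Fin n) (Fin n) ℤ)
    (hB' : B' = B - ∑ k : Fin r, Matrix.single (p k).1 (p k).2 1)
    (hbip : ∃ c : Fin n → Bool, ∀ i j : Fin n, i < j → 1 ≤ B' i j → c i ≠ c j) :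
    IsSignable B⁻¹ :=
  stmt15_general B h1 h2 h3 r p hprime hchain hedge B' hB' hbip
end

section
/- Define the graph Δ_D on {1,…,n} with an edge between i and j (for i < j) exactly when B_{i,j} ≥ 1 and ⟨i,j⟩ = −1 (i.e., Δ_D is obtained from D by removing every edge joining vertices i, j with ⟨i,j⟩ = 1). If B is signable, then Δ_D is bipartite: there is a function c from {1,…,n} to {0,1} with c_i ≠ c_j for every edge {i,j} of Δ_D. -/
/-!
Write `B = 1 + N` with `N` strictly upper triangular and nonnegative, so that
`B⁻¹ = ∑ₘ (-N)ᵐ`. If every path from `i` to `j` has length one, only the term `m = 1`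
contributes, so `B⁻¹ i j = -N i j < 0` and a signing `s` must have `s i * s j = -1`.
A longest path `i → v → ⋯ → j` of length `ℓ ≥ 2` splits into an edge `i → v` that is a
longest path and a longest path `v → j` of length `ℓ - 1`; by induction `s i * s j = (-1) ^ ℓ`.
For an edge with `⟨i,j⟩ = -1` this gives `s i ≠ s j`, so the sign of `s` two-colours `Δ_D`.
-/

open Matrix

open Finset

namespace Matrix

variable {R : Type*} {n : ℕ}

-- Its greatest element is the longest-path length `ℓ(i,j)` of the multigraph with adjacency
-- matrix `N`, since `(N ^ m) i j` counts the paths of length `m`.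
def pathLengths [Semiring R] (N : Matrix (Fin n) (Fin n) R) (i j : Fin n) : Set ℕ :=
  {m | 1 ≤ m ∧ (N ^ m) i j ≠ 0}

section StrictlyUpper

variable [Semiring R] {N : Matrix (Fin n) (Fin n) R} (hN : ∀ i j, j ≤ i → N i j = 0)
include hN

theorem val_add_le_of_pow_apply_ne_zero {m : ℕ} {i j : Fin n} (h : (N ^ m) i j ≠ 0) :
    i.val + m ≤ j.val := by
  induction m generalizing j with
  | zero =>
    obtain rfl : i = j := by_contra fun hij => h (by rw [pow_zero, one_apply_ne hij])
    simp
  | succ m ih =>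
    rw [pow_succ, mul_apply] at h
    obtain ⟨v, -, hv⟩ := exists_ne_zero_of_sum_ne_zero h
    have hvj : v < j := lt_of_not_ge fun hjv => hv (by rw [hN v j hjv, mul_zero])
    have := ih (left_ne_zero_of_mul hv)
    have := Fin.lt_def.mp hvj
    omega

theorem pow_card_eq_zero_of_strictlyUpper : N ^ n = 0 := by
  ext i j
  by_contra h
  have := val_add_le_of_pow_apply_ne_zero hN h
  omega

theorem isGreatest_sSup_pathLengths {i j : Fin n} (h : (pathLengths N i j).Nonempty) :
    IsGreatest (pathLengths N i j) (sSup (pathLengths N i j)) := by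
  have hbdd : BddAbove (pathLengths N i j) :=
    ⟨j.val, fun m hm => by have := val_add_le_of_pow_apply_ne_zero hN hm.2; omega⟩
  exact ⟨Nat.sSup_mem h hbdd, fun m hm => le_csSup hbdd hm⟩

end StrictlyUpper

theorem pow_add_apply_ne_zero [Semiring R] [PartialOrder R] [IsStrictOrderedRing R]
    {N : Matrix (Fin n) (Fin n) R} (hN₀ : ∀ i j, 0 ≤ N i j) {a b : ℕ} {i v j : Fin n}
    (ha : (N ^ a) i v ≠ 0) (hb : (N ^ b) v j ≠ 0) : (N ^ (a + b)) i j ≠ 0 := by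
  have hpos : 0 < (N ^ a) i v * (N ^ b) v j :=
    mul_pos ((pow_apply_nonneg hN₀ a i v).lt_of_ne' ha)
      ((pow_apply_nonneg hN₀ b v j).lt_of_ne' hb)
  rw [pow_add, mul_apply]
  refine (hpos.trans_le (Finset.single_le_sum (f := fun w => (N ^ a) i w * (N ^ b) w j)
    (fun w _ => ?_) (mem_univ v))).ne'
  exact mul_nonneg (pow_apply_nonneg hN₀ a i w) (pow_apply_nonneg hN₀ b w j)

theorem exists_isGreatest_pathLengths_split [Semiring R] [PartialOrder R]
    [IsStrictOrderedRing R] {N : Matrix (Fin n) (Fin n) R} (hN₀ : ∀ i j, 0 ≤ N i j)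
    {k : ℕ} {i j : Fin n} (h : IsGreatest (pathLengths N i j) (k + 2)) :
    ∃ v, IsGreatest (pathLengths N i v) 1 ∧ IsGreatest (pathLengths N v j) (k + 1) := by
  have hne := h.1.2
  rw [pow_succ', mul_apply] at hne
  obtain ⟨v, -, hv⟩ := exists_ne_zero_of_sum_ne_zero hne
  have hiv : (N ^ 1) i v ≠ 0 := by simpa using left_ne_zero_of_mul hv
  have hvj := right_ne_zero_of_mul hv
  refine ⟨v, ⟨⟨le_rfl, hiv⟩, fun m hm => ?_⟩, ⟨⟨by omega, hvj⟩, fun m hm => ?_⟩⟩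
  · have := h.2 ⟨by omega, pow_add_apply_ne_zero hN₀ hm.2 hvj⟩
    omega
  · have := h.2 ⟨by omega, pow_add_apply_ne_zero hN₀ hiv hm.2⟩
    omega

section Inverse

variable [CommRing R] {N : Matrix (Fin n) (Fin n) R} (hN : ∀ i j, j ≤ i → N i j = 0)
include hN

theorem inv_one_add_apply_of_strictlyUpper (i j : Fin n) :
    (1 + N)⁻¹ i j = ∑ m ∈ range n, (-1) ^ m * (N ^ m) i j := by
  have hinv : (1 + N)⁻¹ = ∑ m ∈ range n, (-N) ^ m := by
    refine inv_eq_left_inv ?_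
    simpa [neg_pow N, pow_card_eq_zero_of_strictlyUpper hN] using geom_sum_mul_neg (-N) n
  rw [hinv, sum_apply]
  refine sum_congr rfl fun m _ => ?_
  rw [← neg_one_smul R N, smul_pow, smul_apply, smul_eq_mul]

theorem inv_one_add_apply_of_isGreatest_one {i j : Fin n}
    (h : IsGreatest (pathLengths N i j) 1) : (1 + N)⁻¹ i j = -N i j := by
  have hij := val_add_le_of_pow_apply_ne_zero hN h.1.2
  have h1n : 1 < n := by have := j.isLt; omega
  rw [inv_one_add_apply_of_strictlyUpper hN, sum_eq_single_of_mem 1 (mem_range.2 h1n)]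
  · simp
  · rintro (_ | m) - hm
    · simp [one_apply_ne (Fin.ne_of_val_ne (by omega : i.val ≠ j.val))]
    · have : (N ^ (m + 1)) i j = 0 :=
        by_contra fun h' => hm (le_antisymm (h.2 ⟨by omega, h'⟩) (by omega))
      simp [this]

end Inverse

section Signing

variable [CommRing R] [LinearOrder R] [IsStrictOrderedRing R] {N : Matrix (Fin n) (Fin n) R}
  (hN : ∀ i j, j ≤ i → N i j = 0) (hN₀ : ∀ i j, 0 ≤ N i j) {s : Fin n → R}
  (hsign : ∀ i j, s i * (1 + N)⁻¹ i j * s j = |(1 + N)⁻¹ i j|)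
include hN hN₀ hsign

theorem mul_eq_neg_one_of_isGreatest_pathLengths_one {i j : Fin n}
    (h : IsGreatest (pathLengths N i j) 1) : s i * s j = -1 := by
  have hpos : 0 < N i j := (hN₀ i j).lt_of_ne' (by simpa using h.1.2)
  have hij := hsign i j
  rw [inv_one_add_apply_of_isGreatest_one hN h, abs_neg, abs_of_pos hpos] at hij
  have : (s i * s j + 1) * N i j = 0 := by linear_combination -hij
  exact eq_neg_of_add_eq_zero_left ((mul_eq_zero.1 this).resolve_right hpos.ne')

theorem mul_eq_neg_one_pow_of_isGreatest_pathLengths (hs : ∀ i, s i = 1 ∨ s i = -1)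
    {ℓ : ℕ} {i j : Fin n} (h : IsGreatest (pathLengths N i j) ℓ) :
    s i * s j = (-1) ^ ℓ := by
  induction ℓ generalizing i j with
  | zero => exact absurd h.1.1 (by norm_num)
  | succ ℓ ih =>
    rcases ℓ with _ | k
    · simpa using mul_eq_neg_one_of_isGreatest_pathLengths_one hN hN₀ hsign h
    · obtain ⟨v, hiv, hvj⟩ := exists_isGreatest_pathLengths_split hN₀ h
      have hv : s v * s v = 1 := by rcases hs v with h | h <;> simp [h]
      calc s i * s j = (s i * s v) * (s v * s j) := by linear_combination (-(s i * s j)) * hv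
        _ = (-1) * (-1) ^ (k + 1) := by
          rw [mul_eq_neg_one_of_isGreatest_pathLengths_one hN hN₀ hsign hiv, ih hvj]
        _ = (-1) ^ (k + 2) := by ring

end Signing

end Matrix

theorem pairing_eq_neg_one_pow_sSup {n : ℕ} {B : Matrix (Fin n) (Fin n) ℤ} {i j : Fin n}
    (hij : i ≠ j) (h : (pathLengths (B - 1) i j).Nonempty) :
    pairing B i j = (-1) ^ sSup (pathLengths (B - 1) i j) := by
  rw [pairing, if_neg hij]
  exact if_pos h

theorem stmt16_general {n : ℕ} (B : Matrix (Fin n) (Fin n) ℤ)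
    (h1 : ∀ i, B i i = 1) (h2 : ∀ i j : Fin n, j < i → B i j = 0)
    (h3 : ∀ i j : Fin n, i < j → 0 ≤ B i j)
    (hsig : IsSignable B⁻¹) :
    ∃ c : Fin n → Bool, ∀ i j : Fin n,
      i < j → 1 ≤ B i j → pairing B i j = -1 → c i ≠ c j := by
  obtain ⟨s, hs, hsign⟩ := hsig
  rw [← add_sub_cancel 1 B] at hsign
  have hN : ∀ i j, j ≤ i → (B - 1) i j = 0 := by
    intro i j hji
    rcases hji.lt_or_eq with hlt | rfl
    · simp [one_apply_ne hlt.ne', h2 i j hlt]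
    · simp [h1]
  have hN₀ : ∀ i j, 0 ≤ (B - 1) i j := by
    intro i j
    rcases lt_or_ge i j with hlt | hji
    · simpa [one_apply_ne hlt.ne] using h3 i j hlt
    · exact (hN i j hji).ge
  refine ⟨fun i => decide (s i = 1), fun i j hij hBij hpair => ?_⟩
  have hpath : (pathLengths (B - 1) i j).Nonempty :=
    ⟨1, le_rfl, by rw [pow_one, Matrix.sub_apply, one_apply_ne hij.ne, sub_zero]; omega⟩
  have hsij := mul_eq_neg_one_pow_of_isGreatest_pathLengths hN hN₀ hsign hs
    (isGreatest_sSup_pathLengths hN hpath)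
  rw [← pairing_eq_neg_one_pow_sSup hij.ne hpath, hpair] at hsij
  rcases hs i with hi | hi <;> rcases hs j with hj | hj <;> simp [hi, hj] at hsij ⊢

/-- Let `Δ_D` be the graph on the vertices with an edge between
`i < j` exactly when `B i j ≥ 1` and `⟨i,j⟩ = -1`.  If `B` is signable, then `Δ_D`
is bipartite. -/
theorem stmt16 {n : ℕ} (hn : 1 ≤ n) (B : Matrix (Fin n) (Fin n) ℤ)
    (h1 : ∀ i, B i i = 1) (h2 : ∀ i j : Fin n, j < i → B i j = 0)
    (h3 : ∀ i j : Fin n, i < j → 0 ≤ B i j)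
    (hsig : IsSignable B⁻¹) :
    ∃ c : Fin n → Bool, ∀ i j : Fin n,
      i < j → 1 ≤ B i j → pairing B i j = -1 → c i ≠ c j :=
  stmt16_general B h1 h2 h3 hsig
end

section
/- Assume S is valid. For each d ∈ {1,…,n−1} let S_d = {s ∈ S : ((B−I)^m)_{d,s} ≠ 0 for some m ≥ 0}, and partition S_d into S_d⁺ = {s ∈ S_d : ⟨s,n⟩ = +1} and S_d⁻ = {s ∈ S_d : ⟨s,n⟩ = −1}, where ⟨·,·⟩ is computed from B. Then B is signable if and only if for every d ∈ {1,…,n−1} with |S_d| ≥ 2 one has ∑_{s∈S_d⁻} |(B⁻¹)_{d,s}| ≥ ∑_{s∈S_d⁺} |(B⁻¹)_{d,s}|. -/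
open Matrix

/-- The matrix of the digraph `D_S` obtained from the digraph `D₀` (with adjacency
matrix `B₀ - I`) by adjoining a new last vertex `n` and one edge `s → n` for each
`s ∈ S`. -/
def extendMat {k : ℕ} (B₀ : Matrix (Fin k) (Fin k) ℤ) (S : Finset (Fin k)) :
    Matrix (Fin (k + 1)) (Fin (k + 1)) ℤ :=
  Matrix.of fun i j =>
    if hi : (i : ℕ) < k then
      if hj : (j : ℕ) < k then B₀ ⟨i, hi⟩ ⟨j, hj⟩
      else if (⟨i, hi⟩ : Fin k) ∈ S then 1 else 0
    else if (j : ℕ) < k then 0 else 1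

/-!
Let `t` be a sign vector that alternates along the edges of the maximal-path graph `Γ`. Cutting a
longest path `i → ⋯ → j` after its first edge, that edge lies in `Γ` and the rest is a longest path
from its endpoint, so by induction `t i * t j = (-1) ^ ℓ(i, j) = ⟨i, j⟩` for every reachable pair.
A signing of `B⁻¹` alternates along `Γ` because `B⁻¹ = -B` on the edges of `Γ`; conversely a
2-colouring of `Γ` gives such a vector, which agrees with the signing of `B₀⁻¹` on all reachable
pairs of `D₀`, hence signs the top-left block of `B⁻¹ = (B₀⁻¹ *; 0 1)`.

The last column is `(B⁻¹)_{d,n} = -∑_{s ∈ S} (B⁻¹)_{d,s}` (from `B⁻¹ B = 1`), and only `s ∈ S_d`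
contribute. Since `t s = ⟨s, n⟩ t n`, this gives
`t d (B⁻¹)_{d,n} t n = ∑_{S_d⁻} |(B⁻¹)_{d,s}| - ∑_{S_d⁺} |(B⁻¹)_{d,s}|`, so the entry `(d, n)` is
correctly signed iff the inequality holds. When `|S_d| ≤ 1` the set `S_d⁺` is empty: a longest
path `s → n` of even length passes through a second vertex of `S` reachable from `d`.
-/

open Finset

theorem mul_mul_eq_abs_of_nonneg {a b x : ℤ} (ha : a = 1 ∨ a = -1) (hb : b = 1 ∨ b = -1)
    (h : 0 ≤ a * x * b) : a * x * b = |x| := by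
  rcases ha with rfl | rfl <;> rcases hb with rfl | rfl <;> simp at h ⊢
  · exact (abs_of_nonneg h).symm
  · exact (abs_of_nonpos h).symm
  · exact (abs_of_nonpos h).symm
  · exact (abs_of_nonneg h).symm

namespace Matrix

section

variable {ι : Type*} [Fintype ι] [DecidableEq ι] {A : Matrix ι ι ℤ}

theorem pow_add_apply_ne_zero_s17 (hA : ∀ i j, 0 ≤ A i j) {a b : ℕ} {i v j : ι}
    (hiv : (A ^ a) i v ≠ 0) (hvj : (A ^ b) v j ≠ 0) : (A ^ (a + b)) i j ≠ 0 := by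
  rw [pow_add, Matrix.mul_apply]
  refine (sum_pos' (fun w _ => mul_nonneg (pow_apply_nonneg hA a i w)
    (pow_apply_nonneg hA b w j)) ⟨v, mem_univ v, ?_⟩).ne'
  exact mul_pos ((pow_apply_nonneg hA a i v).lt_of_ne' hiv)
    ((pow_apply_nonneg hA b v j).lt_of_ne' hvj)

theorem exists_of_pow_add_apply_ne_zero {a b : ℕ} {i j : ι} (h : (A ^ (a + b)) i j ≠ 0) :
    ∃ v, (A ^ a) i v ≠ 0 ∧ (A ^ b) v j ≠ 0 := by
  rw [pow_add, Matrix.mul_apply] at h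
  obtain ⟨v, -, hv⟩ := exists_ne_zero_of_sum_ne_zero h
  exact ⟨v, left_ne_zero_of_mul hv, right_ne_zero_of_mul hv⟩

end

theorem val_add_le_of_pow_apply_ne_zero_s17 {k : ℕ} {A : Matrix (Fin k) (Fin k) ℤ}
    (hA : ∀ i j, j ≤ i → A i j = 0) {m : ℕ} {i j : Fin k} (h : (A ^ m) i j ≠ 0) :
    (i : ℕ) + m ≤ j := by
  induction m generalizing j with
  | zero =>
    rw [pow_zero, Matrix.one_apply] at h
    split_ifs at h with hij
    · simp [hij]
    · exact absurd rfl h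
  | succ m ih =>
    obtain ⟨v, hiv, hvj⟩ := exists_of_pow_add_apply_ne_zero h
    have hvj : v < j := lt_of_not_ge fun hjv => hvj (by rw [pow_one]; exact hA v j hjv)
    have := ih hiv
    omega

end Matrix

-- `B - 1` is the adjacency matrix of an acyclic multidigraph, topologically ordered.
structure IsDigraphMatrix {k : ℕ} (B : Matrix (Fin k) (Fin k) ℤ) : Prop where
  diag : ∀ i, B i i = 1
  lower : ∀ i j, j < i → B i j = 0
  upper_nonneg : ∀ i j, i < j → 0 ≤ B i j

-- `ℓ(i, j)`; it is `0` when there is no path (`sSup ∅ = 0`).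
noncomputable def longestPath {k : ℕ} (B : Matrix (Fin k) (Fin k) ℤ) (i j : Fin k) : ℕ :=
  sSup {m : ℕ | 1 ≤ m ∧ ((B - 1) ^ m) i j ≠ 0}

theorem pairing_of_ne {k : ℕ} {B : Matrix (Fin k) (Fin k) ℤ} {i j : Fin k} (hij : i ≠ j)
    (h : ¬ZeroPair B i j) : pairing B i j = (-1) ^ longestPath B i j := by
  simp only [ZeroPair, not_forall, exists_prop] at h
  rw [pairing, if_neg hij, if_pos h, longestPath]

namespace IsDigraphMatrix

variable {k : ℕ} {B : Matrix (Fin k) (Fin k) ℤ} (hB : IsDigraphMatrix B)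
include hB

theorem sub_one_apply_of_le {i j : Fin k} (h : j ≤ i) : (B - 1) i j = 0 := by
  rcases h.lt_or_eq with h | rfl
  · rw [Matrix.sub_apply, Matrix.one_apply_ne h.ne', hB.lower i j h, sub_zero]
  · rw [Matrix.sub_apply, Matrix.one_apply_eq, hB.diag, sub_self]

theorem sub_one_apply_nonneg (i j : Fin k) : 0 ≤ (B - 1) i j := by
  rcases lt_or_ge i j with h | h
  · rw [Matrix.sub_apply, Matrix.one_apply_ne h.ne, sub_zero]
    exact hB.upper_nonneg i j h
  · rw [hB.sub_one_apply_of_le h]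

theorem val_add_le {m : ℕ} {i j : Fin k} (h : ((B - 1) ^ m) i j ≠ 0) : (i : ℕ) + m ≤ j :=
  val_add_le_of_pow_apply_ne_zero_s17 (fun _ _ => hB.sub_one_apply_of_le) h

theorem sub_one_pow_apply_eq_zero {m : ℕ} {i j : Fin k} (h : (j : ℕ) < i + m) :
    ((B - 1) ^ m) i j = 0 :=
  not_not.mp fun hne => (hB.val_add_le hne).not_gt h

theorem sub_one_pow_eq_zero {N : ℕ} (hN : k ≤ N) : (B - 1) ^ N = 0 := by
  ext i j
  exact hB.sub_one_pow_apply_eq_zero (by omega)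

theorem inv_apply_eq_sum {N : ℕ} (hN : k ≤ N) (i j : Fin k) :
    B⁻¹ i j = ∑ m ∈ range N, (-1) ^ m * ((B - 1) ^ m) i j := by
  have hinv : B * ∑ m ∈ range N, (-(B - 1)) ^ m = 1 := by
    have := mul_neg_geom_sum (-(B - 1)) N
    rwa [sub_neg_eq_add, add_sub_cancel, neg_pow', hB.sub_one_pow_eq_zero hN, zero_mul,
      sub_zero] at this
  rw [Matrix.inv_eq_right_inv hinv, Matrix.sum_apply]
  refine sum_congr rfl fun m _ => ?_
  rw [← neg_one_smul ℤ (B - 1), smul_pow, Matrix.smul_apply, smul_eq_mul]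

theorem inv_apply_eq_zero {i j : Fin k} (h : ∀ m : ℕ, ((B - 1) ^ m) i j = 0) : B⁻¹ i j = 0 := by
  rw [hB.inv_apply_eq_sum le_rfl]
  exact sum_eq_zero fun m _ => by rw [h, mul_zero]

theorem inv_apply_of_lt {i j : Fin k} (hji : j < i) : B⁻¹ i j = 0 :=
  hB.inv_apply_eq_zero fun _ => hB.sub_one_pow_apply_eq_zero (by rw [Fin.lt_def] at hji; omega)

theorem inv_apply_self (i : Fin k) : B⁻¹ i i = 1 := by
  rw [hB.inv_apply_eq_sum le_rfl, sum_eq_single_of_mem 0 (mem_range.mpr (i.pos))]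
  · simp
  · intro m _ hm
    rw [hB.sub_one_pow_apply_eq_zero (by omega), mul_zero]

theorem inv_mul_self : B⁻¹ * B = 1 := by
  refine Matrix.nonsing_inv_mul B ?_
  rw [Matrix.det_of_isUpperTriangular fun i j h => hB.lower i j h]
  simp [hB.diag]

theorem gammaEdge_of_sub_one_apply_ne_zero {i j : Fin k} (hij : (B - 1) i j ≠ 0)
    (hlong : ∀ m, 2 ≤ m → ((B - 1) ^ m) i j = 0) : GammaEdge B i j := by
  have hlt : i < j := lt_of_not_ge fun h => hij (hB.sub_one_apply_of_le h)
  have hpos := (hB.sub_one_apply_nonneg i j).lt_of_ne' hij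
  rw [Matrix.sub_apply, Matrix.one_apply_ne hlt.ne, sub_zero] at hpos
  exact ⟨hlt, hpos, hlong⟩

theorem inv_apply_of_gammaEdge {i j : Fin k} (h : GammaEdge B i j) : B⁻¹ i j = -B i j := by
  obtain ⟨hlt, -, hlong⟩ := h
  rw [hB.inv_apply_eq_sum le_rfl, sum_eq_single_of_mem 1 (mem_range.mpr (by omega))]
  · rw [pow_one, pow_one, Matrix.sub_apply, Matrix.one_apply_ne hlt.ne]
    ring
  · intro m _ hm
    rcases Nat.lt_or_ge m 2 with h | h
    · obtain rfl : m = 0 := by omega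
      simp [Matrix.one_apply_ne hlt.ne]
    · rw [hlong m h, mul_zero]

theorem mul_eq_neg_one_of_gammaEdge {t : Fin k → ℤ} (ht : ∀ v, t v = 1 ∨ t v = -1)
    (hts : ∀ i j, t i * B⁻¹ i j * t j = |B⁻¹ i j|) {i j : Fin k} (h : GammaEdge B i j) :
    t i * t j = -1 := by
  have hneg : B⁻¹ i j < 0 := by rw [hB.inv_apply_of_gammaEdge h]; linarith [h.2.1]
  have := hts i j
  rw [abs_of_neg hneg] at this
  rcases ht i with hi | hi <;> rcases ht j with hj | hj <;> rw [hi, hj] at this ⊢ <;> linarith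

theorem bddAbove_pathLengths (i j : Fin k) :
    BddAbove {m : ℕ | 1 ≤ m ∧ ((B - 1) ^ m) i j ≠ 0} :=
  ⟨k, fun m hm => by have := hB.val_add_le hm.2; omega⟩

theorem le_longestPath {m : ℕ} {i j : Fin k} (hm : 1 ≤ m) (h : ((B - 1) ^ m) i j ≠ 0) :
    m ≤ longestPath B i j :=
  le_csSup (hB.bddAbove_pathLengths i j) ⟨hm, h⟩

theorem longestPath_spec {i j : Fin k} (h : ¬ZeroPair B i j) :
    1 ≤ longestPath B i j ∧ ((B - 1) ^ longestPath B i j) i j ≠ 0 := by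
  simp only [ZeroPair, not_forall, exists_prop] at h
  exact Nat.sSup_mem h (hB.bddAbove_pathLengths i j)

theorem longestPath_eq_one {i j : Fin k} (h : GammaEdge B i j) : longestPath B i j = 1 := by
  have h1 : ((B - 1) ^ (1 : ℕ)) i j ≠ 0 := by
    rw [pow_one, Matrix.sub_apply, Matrix.one_apply_ne h.1.ne]; linarith [h.2.1]
  refine le_antisymm (csSup_le ⟨1, le_rfl, h1⟩ fun m hm => ?_) (hB.le_longestPath le_rfl h1)
  by_contra! hm2
  exact hm.2 (h.2.2 m hm2)

theorem mul_eq_neg_one_pow_longestPath {t : Fin k → ℤ} (ht : ∀ v, t v = 1 ∨ t v = -1)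
    (hΓ : ∀ v w, GammaEdge B v w → t v * t w = -1) {i j : Fin k} (hij : ¬ZeroPair B i j) :
    t i * t j = (-1) ^ longestPath B i j := by
  induction hL : longestPath B i j using Nat.strong_induction_on generalizing i with
  | _ L ih =>
  obtain ⟨hL1, hLij⟩ := hL ▸ hB.longestPath_spec hij
  have hmax : ∀ m, 1 ≤ m → ((B - 1) ^ m) i j ≠ 0 → m ≤ L := fun m hm h =>
    hL ▸ hB.le_longestPath hm h
  obtain rfl | hL2 := hL1.eq_or_lt
  · refine hΓ i j (hB.gammaEdge_of_sub_one_apply_ne_zero (by rwa [pow_one] at hLij) ?_)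
    exact fun m hm => not_not.mp fun h => by have := hmax m (by omega) h; omega
  obtain ⟨v, hiv, hvj⟩ := exists_of_pow_add_apply_ne_zero (show ((B - 1) ^ (1 + (L - 1))) i j ≠ 0
    by rwa [Nat.add_sub_cancel' hL1])
  rw [pow_one] at hiv
  have hnonneg := hB.sub_one_apply_nonneg
  have hΓiv : GammaEdge B i v := by
    refine hB.gammaEdge_of_sub_one_apply_ne_zero hiv fun m hm => not_not.mp fun h => ?_
    have := hmax _ (by omega) (pow_add_apply_ne_zero_s17 hnonneg h hvj)
    omega
  have hvL : longestPath B v j = L - 1 := by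
    refine le_antisymm (csSup_le ⟨L - 1, by omega, hvj⟩ fun m hm => ?_)
      (hB.le_longestPath (by omega) hvj)
    have := hmax (1 + m) (by omega) (pow_add_apply_ne_zero_s17 hnonneg (by rwa [pow_one]) hm.2)
    omega
  have hvv : t v * t v = 1 := mul_self_eq_one_iff.mpr (ht v)
  calc t i * t j = (t i * t v) * (t v * t j) := by linear_combination (-(t i * t j)) * hvv
    _ = (-1) * (-1) ^ (L - 1) :=
      by rw [hΓ i v hΓiv, ih (L - 1) (by omega) (fun h => hvj (h (L - 1) (by omega))) hvL]
    _ = (-1) ^ L := by rw [← pow_succ', Nat.sub_add_cancel hL1]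

end IsDigraphMatrix

section extendMat

variable {n : ℕ} {B₀ : Matrix (Fin n) (Fin n) ℤ} {S : Finset (Fin n)}

@[simp] theorem extendMat_castSucc_castSucc (i j : Fin n) :
    extendMat B₀ S i.castSucc j.castSucc = B₀ i j := by
  simp [extendMat]

@[simp] theorem extendMat_castSucc_last (i : Fin n) :
    extendMat B₀ S i.castSucc (Fin.last n) = if i ∈ S then 1 else 0 := by
  simp [extendMat]

@[simp] theorem extendMat_last_castSucc (j : Fin n) :
    extendMat B₀ S (Fin.last n) j.castSucc = 0 := by
  simp [extendMat]

@[simp] theorem extendMat_last_last : extendMat B₀ S (Fin.last n) (Fin.last n) = 1 := by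
  simp [extendMat]

theorem IsDigraphMatrix.extendMat (hB₀ : IsDigraphMatrix B₀) (S : Finset (Fin n)) :
    IsDigraphMatrix (extendMat B₀ S) where
  diag i := by
    induction i using Fin.lastCases <;> simp [hB₀.diag]
  lower i j hji := by
    induction i using Fin.lastCases with
    | last => induction j using Fin.lastCases <;> simp_all
    | cast i =>
      induction j using Fin.lastCases with
      | last => exact absurd hji (Fin.castSucc_lt_last i).not_gt
      | cast j => simpa using hB₀.lower i j (by simpa using hji)
  upper_nonneg i j hij := by
    induction j using Fin.lastCases with
    | last => induction i using Fin.lastCases <;> simp; split_ifs <;> simp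
    | cast j =>
      induction i using Fin.lastCases with
      | last => exact absurd hij (Fin.castSucc_lt_last j).not_gt
      | cast i => simpa using hB₀.upper_nonneg i j (by simpa using hij)

theorem extendMat_sub_one_pow_castSucc (m : ℕ) (i j : Fin n) :
    ((extendMat B₀ S - 1) ^ m) i.castSucc j.castSucc = ((B₀ - 1) ^ m) i j := by
  induction m generalizing j with
  | zero => simp [Matrix.one_apply]
  | succ m ih =>
    simp only [pow_succ, Matrix.mul_apply, Fin.sum_univ_castSucc, ih, Matrix.sub_apply,
      extendMat_castSucc_castSucc, extendMat_last_castSucc, Matrix.one_apply, Fin.castSucc_inj,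
      (Fin.castSucc_lt_last j).ne', if_false, sub_zero, mul_zero, add_zero]

theorem zeroPair_extendMat_castSucc_iff {i j : Fin n} :
    ZeroPair (extendMat B₀ S) i.castSucc j.castSucc ↔ ZeroPair B₀ i j := by
  simp only [ZeroPair, extendMat_sub_one_pow_castSucc]

theorem longestPath_extendMat_castSucc (i j : Fin n) :
    longestPath (extendMat B₀ S) i.castSucc j.castSucc = longestPath B₀ i j := by
  simp only [longestPath, extendMat_sub_one_pow_castSucc]

theorem inv_extendMat_castSucc (hB₀ : IsDigraphMatrix B₀) (i j : Fin n) :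
    (extendMat B₀ S)⁻¹ i.castSucc j.castSucc = B₀⁻¹ i j := by
  rw [(hB₀.extendMat S).inv_apply_eq_sum le_rfl, hB₀.inv_apply_eq_sum (Nat.le_succ n)]
  simp only [extendMat_sub_one_pow_castSucc]

theorem inv_extendMat_castSucc_last (hB₀ : IsDigraphMatrix B₀) (d : Fin n) :
    (extendMat B₀ S)⁻¹ d.castSucc (Fin.last n) =
      -∑ s ∈ S, (extendMat B₀ S)⁻¹ d.castSucc s.castSucc := by
  have h := congrFun (congrFun (hB₀.extendMat S).inv_mul_self d.castSucc) (Fin.last n)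
  rw [Matrix.mul_apply, Fin.sum_univ_castSucc, Matrix.one_apply_ne (Fin.castSucc_lt_last d).ne]
    at h
  simp only [extendMat_castSucc_last, mul_ite, mul_one, mul_zero, sum_ite_mem, univ_inter,
    extendMat_last_last] at h
  linarith

theorem not_zeroPair_extendMat_last {s : Fin n} (hs : s ∈ S) :
    ¬ZeroPair (extendMat B₀ S) s.castSucc (Fin.last n) := fun h => by
  simpa [hs] using h 1 le_rfl

theorem pairing_extendMat_last_eq_neg_one (hB₀ : IsDigraphMatrix B₀) {s : Fin n} (hs : s ∈ S)
    (h : ∀ w ∈ S, ZeroPair (extendMat B₀ S) s.castSucc w.castSucc) :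
    pairing (extendMat B₀ S) s.castSucc (Fin.last n) = -1 := by
  have hB := hB₀.extendMat S
  have hΓ : GammaEdge (extendMat B₀ S) s.castSucc (Fin.last n) := by
    refine hB.gammaEdge_of_sub_one_apply_ne_zero (by simp [hs])
      fun m hm => not_not.mp fun hne => ?_
    obtain ⟨v, hsv, hvn⟩ := exists_of_pow_add_apply_ne_zero
      (show ((extendMat B₀ S - 1) ^ ((m - 1) + 1)) s.castSucc (Fin.last n) ≠ 0
        by rwa [Nat.sub_add_cancel (by omega)])
    rw [pow_one] at hvn
    induction v using Fin.lastCases with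
    | last => exact hvn (hB.sub_one_apply_of_le le_rfl)
    | cast w =>
      have hw : w ∈ S := by
        by_contra hw
        simp [hw] at hvn
      exact hsv (h w hw (m - 1) (by omega))
  rw [pairing_of_ne (Fin.castSucc_lt_last s).ne (not_zeroPair_extendMat_last hs),
    hB.longestPath_eq_one hΓ, pow_one]

-- `S_d` and `S_d^σ`; paths of length `0` count, so `d ∈ S_d` whenever `d ∈ S`.
open Classical in
noncomputable def reachableSources (B : Matrix (Fin (n + 1)) (Fin (n + 1)) ℤ)
    (S : Finset (Fin n)) (d : Fin n) : Finset (Fin n) :=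
  S.filter fun s => ∃ m : ℕ, ((B - 1) ^ m) d.castSucc s.castSucc ≠ 0

open Classical in
noncomputable def reachableSourcesOfSign (B : Matrix (Fin (n + 1)) (Fin (n + 1)) ℤ)
    (S : Finset (Fin n)) (d : Fin n) (σ : ℤ) : Finset (Fin n) :=
  S.filter fun s => (∃ m : ℕ, ((B - 1) ^ m) d.castSucc s.castSucc ≠ 0) ∧
    pairing B s.castSucc (Fin.last n) = σ

open Classical in
theorem reachableSourcesOfSign_one_eq_empty (hB₀ : IsDigraphMatrix B₀) {d : Fin n}
    (hd : (reachableSources (extendMat B₀ S) S d).card ≤ 1) :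
    reachableSourcesOfSign (extendMat B₀ S) S d 1 = ∅ := by
  rw [eq_empty_iff_forall_notMem]
  intro s hs
  obtain ⟨hsS, ⟨m₀, hds⟩, hpos⟩ := mem_filter.mp hs
  have hB := hB₀.extendMat S
  -- a path `s → w` with `w ∈ S` would put a second vertex `w` into `S_d`
  have hzero : ∀ w ∈ S, ZeroPair (extendMat B₀ S) s.castSucc w.castSucc :=
    fun w hw m hm => not_not.mp fun hsw => by
      obtain rfl : s = w := card_le_one.mp hd s (mem_filter.mpr ⟨hsS, m₀, hds⟩) w
        (mem_filter.mpr ⟨hw, m₀ + m, pow_add_apply_ne_zero_s17 hB.sub_one_apply_nonneg hds hsw⟩)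
      have := hB.val_add_le hsw
      omega
  rw [pairing_extendMat_last_eq_neg_one hB₀ hsS hzero] at hpos
  norm_num at hpos

theorem signed_inv_extendMat_castSucc_last (hB₀ : IsDigraphMatrix B₀) {t : Fin (n + 1) → ℤ}
    (ht : ∀ v, t v = 1 ∨ t v = -1)
    (hΓ : ∀ v w, GammaEdge (extendMat B₀ S) v w → t v * t w = -1) (d : Fin n)
    (hd : ∀ s : Fin n, t d.castSucc * (extendMat B₀ S)⁻¹ d.castSucc s.castSucc * t s.castSucc =
      |(extendMat B₀ S)⁻¹ d.castSucc s.castSucc|) :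
    t d.castSucc * (extendMat B₀ S)⁻¹ d.castSucc (Fin.last n) * t (Fin.last n) =
      ∑ s ∈ reachableSourcesOfSign (extendMat B₀ S) S d (-1),
          |(extendMat B₀ S)⁻¹ d.castSucc s.castSucc| -
        ∑ s ∈ reachableSourcesOfSign (extendMat B₀ S) S d 1,
          |(extendMat B₀ S)⁻¹ d.castSucc s.castSucc| := by
  have hB := hB₀.extendMat S
  simp only [reachableSourcesOfSign, sum_filter, ← sum_sub_distrib]
  rw [inv_extendMat_castSucc_last hB₀, mul_neg, neg_mul, mul_sum, sum_mul, ← sum_neg_distrib]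
  refine sum_congr rfl fun s hs => ?_
  set X := (extendMat B₀ S)⁻¹ d.castSucc s.castSucc
  by_cases hreach : ∃ m : ℕ, ((extendMat B₀ S - 1) ^ m) d.castSucc s.castSucc ≠ 0
  · have hp :
        pairing (extendMat B₀ S) s.castSucc (Fin.last n) = t s.castSucc * t (Fin.last n) := by
      rw [pairing_of_ne (Fin.castSucc_lt_last s).ne (not_zeroPair_extendMat_last hs),
        hB.mul_eq_neg_one_pow_longestPath ht hΓ (not_zeroPair_extendMat_last hs)]
    have hss : t s.castSucc * t s.castSucc = 1 := mul_self_eq_one_iff.mpr (ht _)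
    have hX : t d.castSucc * X * t (Fin.last n) =
        |X| * pairing (extendMat B₀ S) s.castSucc (Fin.last n) := by
      rw [hp]
      linear_combination
        (t s.castSucc * t (Fin.last n)) * hd s - (t d.castSucc * X * t (Fin.last n)) * hss
    rw [hX]
    rcases ht s.castSucc with h | h <;> rcases ht (Fin.last n) with h' | h' <;>
      simp [hp, h, h', hreach]
  · simp [X, hB.inv_apply_eq_zero (not_exists_not.mp hreach)]

theorem signing_inv_extendMat_castSucc (hB₀ : IsDigraphMatrix B₀) (hD0 : IsSignable B₀⁻¹)
    {t : Fin (n + 1) → ℤ} (ht : ∀ v, t v = 1 ∨ t v = -1)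
    (hΓ : ∀ v w, GammaEdge (extendMat B₀ S) v w → t v * t w = -1) (i j : Fin n) :
    t i.castSucc * (extendMat B₀ S)⁻¹ i.castSucc j.castSucc * t j.castSucc =
      |(extendMat B₀ S)⁻¹ i.castSucc j.castSucc| := by
  obtain ⟨ε, hε, hεs⟩ := hD0
  rw [inv_extendMat_castSucc hB₀]
  obtain rfl | hij := eq_or_ne i j
  · rw [hB₀.inv_apply_self, mul_one, abs_one, mul_self_eq_one_iff.mpr (ht _)]
  by_cases hzero : ZeroPair B₀ i j
  · have : B₀⁻¹ i j = 0 := hB₀.inv_apply_eq_zero fun m => by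
      rcases m with _ | m
      · simp [Matrix.one_apply_ne hij]
      · exact hzero _ m.succ_pos
    simp [this]
  have htε : t i.castSucc * t j.castSucc = ε i * ε j := by
    rw [(hB₀.extendMat S).mul_eq_neg_one_pow_longestPath ht hΓ
        (zeroPair_extendMat_castSucc_iff.not.mpr hzero), longestPath_extendMat_castSucc,
      hB₀.mul_eq_neg_one_pow_longestPath hε (fun _ _ => hB₀.mul_eq_neg_one_of_gammaEdge hε hεs)
        hzero]
  linear_combination B₀⁻¹ i j * htε + hεs i j

theorem isSignable_inv_extendMat (hB₀ : IsDigraphMatrix B₀) (hD0 : IsSignable B₀⁻¹)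
    (hvalid : GammaBipartite (extendMat B₀ S))
    (hbal : ∀ d, ∑ s ∈ reachableSourcesOfSign (extendMat B₀ S) S d 1,
          |(extendMat B₀ S)⁻¹ d.castSucc s.castSucc| ≤
        ∑ s ∈ reachableSourcesOfSign (extendMat B₀ S) S d (-1),
          |(extendMat B₀ S)⁻¹ d.castSucc s.castSucc|) :
    IsSignable (extendMat B₀ S)⁻¹ := by
  obtain ⟨c, hc⟩ := hvalid
  have hB := hB₀.extendMat S
  set t : Fin (n + 1) → ℤ := fun v => if c v then 1 else -1
  have ht : ∀ v, t v = 1 ∨ t v = -1 := fun v => by by_cases h : c v <;> simp [t, h]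
  have hΓ : ∀ v w, GammaEdge (extendMat B₀ S) v w → t v * t w = -1 := fun v w h => by
    have := hc v w h
    cases hv : c v <;> cases hw : c w <;> simp_all [t]
  refine ⟨t, ht, fun i j => mul_mul_eq_abs_of_nonneg (ht i) (ht j) ?_⟩
  induction j using Fin.lastCases with
  | cast j =>
    induction i using Fin.lastCases with
    | cast i => exact (signing_inv_extendMat_castSucc hB₀ hD0 ht hΓ i j).symm ▸ abs_nonneg _
    | last => simp [hB.inv_apply_of_lt (Fin.castSucc_lt_last j)]
  | last =>
    induction i using Fin.lastCases with
    | cast d =>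
      rw [signed_inv_extendMat_castSucc_last hB₀ ht hΓ d
        (signing_inv_extendMat_castSucc hB₀ hD0 ht hΓ d)]
      linarith [hbal d]
    | last =>
      rw [hB.inv_apply_self, mul_one]
      exact mul_self_nonneg _

end extendMat

open Classical in
theorem stmt17_general {n : ℕ} (B₀ : Matrix (Fin n) (Fin n) ℤ)
    (h1 : ∀ i, B₀ i i = 1) (h2 : ∀ i j : Fin n, j < i → B₀ i j = 0)
    (h3 : ∀ i j : Fin n, i < j → 0 ≤ B₀ i j)
    (hD0 : IsSignable B₀⁻¹)
    (S : Finset (Fin n))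
    (B : Matrix (Fin (n + 1)) (Fin (n + 1)) ℤ) (hB : B = extendMat B₀ S)
    (hvalid : GammaBipartite B) :
    IsSignable B⁻¹ ↔
      ∀ d : Fin n,
        2 ≤ (S.filter fun s => ∃ m : ℕ, ((B - 1) ^ m) d.castSucc s.castSucc ≠ 0).card →
        (∑ s ∈ S.filter (fun s => (∃ m : ℕ, ((B - 1) ^ m) d.castSucc s.castSucc ≠ 0) ∧
              pairing B s.castSucc (Fin.last n) = 1), |B⁻¹ d.castSucc s.castSucc|) ≤
          ∑ s ∈ S.filter (fun s => (∃ m : ℕ, ((B - 1) ^ m) d.castSucc s.castSucc ≠ 0) ∧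
              pairing B s.castSucc (Fin.last n) = -1), |B⁻¹ d.castSucc s.castSucc| := by
  subst hB
  have hB₀ : IsDigraphMatrix B₀ := ⟨h1, h2, h3⟩
  have hB := hB₀.extendMat S
  change IsSignable _ ↔ ∀ d : Fin n, 2 ≤ (reachableSources _ S d).card →
    ∑ s ∈ reachableSourcesOfSign _ S d 1, _ ≤ ∑ s ∈ reachableSourcesOfSign _ S d (-1), _
  constructor
  · rintro ⟨t, ht, hts⟩ d -
    have := signed_inv_extendMat_castSucc_last hB₀ ht
      (fun _ _ => hB.mul_eq_neg_one_of_gammaEdge ht hts) d fun s => hts _ _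
    linarith [hts d.castSucc (Fin.last n),
      abs_nonneg ((extendMat B₀ S)⁻¹ d.castSucc (Fin.last n))]
  · refine fun hbal => isSignable_inv_extendMat hB₀ hD0 hvalid fun d => ?_
    by_cases hd : 2 ≤ (reachableSources (extendMat B₀ S) S d).card
    · exact hbal d hd
    · rw [reachableSourcesOfSign_one_eq_empty hB₀ (by omega), sum_empty]
      exact sum_nonneg fun _ _ => abs_nonneg _

open Classical in
/-- With `B` the matrix of `D_S` and `S` valid (`Γ_(D_S)` bipartite),
`B` is signable iff for every vertex `d` of `D₀` with `|S_d| ≥ 2` one has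
`∑_(s ∈ S_d⁻) |(B⁻¹) d s| ≥ ∑_(s ∈ S_d⁺) |(B⁻¹) d s|`, where
`S_d = {s ∈ S : some ((B−I)^m) d s ≠ 0, m ≥ 0}` is partitioned according to the
sign of `⟨s, n⟩` computed from `B`. -/
theorem stmt17 {n : ℕ} (hn : 1 ≤ n) (B₀ : Matrix (Fin n) (Fin n) ℤ)
    (h1 : ∀ i, B₀ i i = 1) (h2 : ∀ i j : Fin n, j < i → B₀ i j = 0)
    (h3 : ∀ i j : Fin n, i < j → 0 ≤ B₀ i j)
    (hD0 : IsSignable B₀⁻¹)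
    (S : Finset (Fin n))
    (B : Matrix (Fin (n + 1)) (Fin (n + 1)) ℤ) (hB : B = extendMat B₀ S)
    (hvalid : GammaBipartite B) :
    IsSignable B⁻¹ ↔
      ∀ d : Fin n,
        2 ≤ (S.filter fun s => ∃ m : ℕ, ((B - 1) ^ m) d.castSucc s.castSucc ≠ 0).card →
        (∑ s ∈ S.filter (fun s => (∃ m : ℕ, ((B - 1) ^ m) d.castSucc s.castSucc ≠ 0) ∧
              pairing B s.castSucc (Fin.last n) = 1), |B⁻¹ d.castSucc s.castSucc|) ≤
          ∑ s ∈ S.filter (fun s => (∃ m : ℕ, ((B - 1) ^ m) d.castSucc s.castSucc ≠ 0) ∧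
              pairing B s.castSucc (Fin.last n) = -1), |B⁻¹ d.castSucc s.castSucc| :=
  stmt17_general B₀ h1 h2 h3 hD0 S B hB hvalid
end
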